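/- arXiv:2201.00319 — 4 statements merged into one kernel-verified Lean document; each statement's English description precedes it below -/
import Mathlib

section
/- Let n ≥ d ≥ 1. If τ₁, …, τₙ are unit vectors in ℂ^d, then for every natural number m ≥ 1, the sum over all pairs j,k of |⟨τⱼ, τₖ⟩|^{2m} is at least n² / C(d+m-1, m). -/
/-!
The map `x ↦ x^{⊗m}` into the symmetric tensor power, a space of dimension `C(d+m-1, m)`,
sends unit vectors to unit vectors and `⟪x, y⟫` to `⟪x, y⟫^m`, so it suffices to prove the
case `m = 1` in an arbitrary space of dimension `N`. There, writing the vectors as the columns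
of a coordinate matrix `M`, the Gram matrix `Mᴴ * M` and the frame operator `M * Mᴴ` have the
same Frobenius norm, and the frame operator is an `N × N` matrix of trace `∑ ‖vⱼ‖²`, so
Cauchy–Schwarz on its diagonal gives the bound `(∑ ‖vⱼ‖²)² / N`.
-/

open Finset RCLike Matrix
open scoped InnerProductSpace ComplexConjugate

namespace Matrix

variable {𝕜 m n : Type*} [RCLike 𝕜] [Fintype m] [Fintype n]

theorem re_trace_mul_conjTranspose_self (A : Matrix m n 𝕜) :
    re (A * Aᴴ).trace = ∑ i, ∑ j, ‖A i j‖ ^ 2 := by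
  simp [trace, mul_apply, RCLike.mul_conj]

theorem sum_norm_sq_conjTranspose_mul_self (A : Matrix m n 𝕜) :
    ∑ i, ∑ j, ‖(Aᴴ * A) i j‖ ^ 2 = ∑ i, ∑ j, ‖(A * Aᴴ) i j‖ ^ 2 := by
  rw [← re_trace_mul_conjTranspose_self, ← re_trace_mul_conjTranspose_self]
  simp only [conjTranspose_mul, conjTranspose_conjTranspose]
  rw [← Matrix.mul_assoc, trace_mul_comm]
  simp only [Matrix.mul_assoc]

theorem norm_trace_sq_div_card_le (S : Matrix n n 𝕜) :
    ‖S.trace‖ ^ 2 / Fintype.card n ≤ ∑ i, ∑ j, ‖S i j‖ ^ 2 := by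
  refine div_le_of_le_mul₀ (by positivity) (by positivity) ?_
  calc ‖S.trace‖ ^ 2 ≤ (∑ i, ‖S i i‖) ^ 2 := by
        gcongr
        exact norm_sum_le _ _
    _ ≤ Fintype.card n * ∑ i, ‖S i i‖ ^ 2 := sq_sum_le_card_mul_sum_sq
    _ ≤ Fintype.card n * ∑ i, ∑ j, ‖S i j‖ ^ 2 := by
        gcongr with i
        exact single_le_sum (f := fun j => ‖S i j‖ ^ 2) (fun _ _ => by positivity) (mem_univ i)
    _ = (∑ i, ∑ j, ‖S i j‖ ^ 2) * Fintype.card n := mul_comm _ _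

end Matrix

section FramePotential

variable {𝕜 E ι : Type*} [RCLike 𝕜] [NormedAddCommGroup E] [InnerProductSpace 𝕜 E]
  [FiniteDimensional 𝕜 E] [Fintype ι]

theorem sq_sum_norm_sq_div_finrank_le_sum_norm_inner_sq (v : ι → E) :
    (∑ j, ‖v j‖ ^ 2) ^ 2 / Module.finrank 𝕜 E ≤ ∑ j, ∑ k, ‖⟪v j, v k⟫_𝕜‖ ^ 2 := by
  set M : Matrix (Fin (Module.finrank 𝕜 E)) ι 𝕜 :=
    .of fun a j => (stdOrthonormalBasis 𝕜 E).repr (v j) a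
  have hgram : Matrix.gram 𝕜 v = Mᴴ * M := Matrix.gram_eq_conjTranspose_mul _ v
  have htrace : ‖(M * Mᴴ).trace‖ = ∑ j, ‖v j‖ ^ 2 := by
    rw [Matrix.trace_mul_comm, ← hgram]
    simp only [Matrix.trace, Matrix.diag_apply, Matrix.gram_apply, inner_self_eq_norm_sq_to_K]
    norm_cast
    exact abs_of_nonneg (by positivity)
  calc (∑ j, ‖v j‖ ^ 2) ^ 2 / Module.finrank 𝕜 E
      = ‖(M * Mᴴ).trace‖ ^ 2 / Fintype.card (Fin (Module.finrank 𝕜 E)) := by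
        rw [htrace, Fintype.card_fin]
    _ ≤ ∑ a, ∑ b, ‖(M * Mᴴ) a b‖ ^ 2 := Matrix.norm_trace_sq_div_card_le _
    _ = ∑ j, ∑ k, ‖⟪v j, v k⟫_𝕜‖ ^ 2 := by
        rw [← Matrix.sum_norm_sq_conjTranspose_mul_self, ← hgram]
        rfl

end FramePotential

section SymmetricPower

variable {𝕜 ι : Type*} [RCLike 𝕜] [Fintype ι] [DecidableEq ι]

/-- The coordinates of `x^{⊗m}` in the orthonormal basis of the symmetric tensor power indexed by
multisets of size `m`; the weights `√(countPerms s)` are those of the multinomial theorem. -/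
noncomputable def symPowVec (m : ℕ) (x : EuclideanSpace 𝕜 ι) : EuclideanSpace 𝕜 (Sym ι m) :=
  WithLp.toLp 2 fun s => (√(s.val.countPerms : ℝ) : 𝕜) * (s.val.map x).prod

theorem inner_symPowVec (m : ℕ) (x y : EuclideanSpace 𝕜 ι) :
    ⟪symPowVec m x, symPowVec m y⟫_𝕜 = ⟪x, y⟫_𝕜 ^ m := by
  simp only [PiLp.inner_apply, RCLike.inner_apply, sum_pow, Finset.sym_univ]
  refine sum_congr rfl fun s _ => ?_
  simp only [symPowVec, map_mul, conj_ofReal, Multiset.prod_map_mul, map_multiset_prod,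
    Multiset.map_map, Function.comp_def]
  have hc : (√(s.val.countPerms : ℝ) : 𝕜) * √(s.val.countPerms : ℝ) = s.val.countPerms := by
    rw [← ofReal_mul, Real.mul_self_sqrt (Nat.cast_nonneg _), ofReal_natCast]
  linear_combination ((s.val.map y).prod * (s.val.map fun i => conj (x i)).prod) * hc

theorem norm_symPowVec (m : ℕ) (x : EuclideanSpace 𝕜 ι) : ‖symPowVec m x‖ = ‖x‖ ^ m := by
  have h := inner_symPowVec m x x
  rw [inner_self_eq_norm_sq_to_K, inner_self_eq_norm_sq_to_K, ← pow_mul, ← ofReal_pow,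
    ← ofReal_pow, ofReal_inj, mul_comm, pow_mul] at h
  exact (pow_left_inj₀ (norm_nonneg _) (by positivity) two_ne_zero).1 h

end SymmetricPower

theorem welch_bound_general (d n : ℕ)
    (τ : Fin n → EuclideanSpace ℂ (Fin d)) (hτ : ∀ j, ‖τ j‖ = 1)
    (m : ℕ) :
    (n : ℝ) ^ 2 / ((d + m - 1).choose m : ℝ) ≤
      ∑ j, ∑ k, ‖(inner ℂ (τ j) (τ k) : ℂ)‖ ^ (2 * m) := by
  calc (n : ℝ) ^ 2 / ((d + m - 1).choose m : ℝ)
      = (∑ j, ‖symPowVec m (τ j)‖ ^ 2) ^ 2 /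
          Module.finrank ℂ (EuclideanSpace ℂ (Sym (Fin d) m)) := by
        simp [norm_symPowVec, hτ, Sym.card_sym_eq_choose]
    _ ≤ ∑ j, ∑ k, ‖⟪symPowVec m (τ j), symPowVec m (τ k)⟫_ℂ‖ ^ 2 :=
        sq_sum_norm_sq_div_finrank_le_sum_norm_inner_sq _
    _ = ∑ j, ∑ k, ‖(inner ℂ (τ j) (τ k) : ℂ)‖ ^ (2 * m) := by
        simp only [inner_symPowVec, norm_pow, ← pow_mul, mul_comm]

/-- **Welch bound of order m.** For `n ≥ d ≥ 1` unit vectors `τ₁,…,τₙ` in `ℂ^d` and `m ≥ 1`,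
`∑ⱼ∑ₖ |⟨τⱼ,τₖ⟩|^(2m) ≥ n² / C(d+m-1, m)`. -/
theorem welch_bound (d n : ℕ) (hd : 1 ≤ d) (hdn : d ≤ n)
    (τ : Fin n → EuclideanSpace ℂ (Fin d)) (hτ : ∀ j, ‖τ j‖ = 1)
    (m : ℕ) (hm : 1 ≤ m) :
    (n : ℝ) ^ 2 / ((d + m - 1).choose m : ℝ) ≤
      ∑ j, ∑ k, ‖(inner ℂ (τ j) (τ k) : ℂ)‖ ^ (2 * m) :=
  welch_bound_general d n τ hτ m
end

section
/- Let n ≥ d ≥ 1 and n > 1. If τ₁, …, τₙ are unit vectors in ℂ^d, then for every natural number m ≥ 1, the maximum over pairs j ≠ k of |⟨τⱼ, τₖ⟩|^{2m} is at least (1/(n-1)) · ( n / C(d+m-1, m) − 1 ). -/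
/-!
The m-th symmetric tensor powers of the τⱼ are unit vectors in a space of dimension
D = C(d+m-1, m), with inner products ⟪τⱼ, τₖ⟫^m. For any vectors vⱼ in a D-dimensional space,
∑_{j,k} |⟪vⱼ, vₖ⟫|² is the squared Frobenius norm of the frame operator ∑ⱼ vⱼ vⱼᴴ, whose trace is
∑ⱼ ‖vⱼ‖²; Cauchy–Schwarz on its diagonal gives (∑ⱼ ‖vⱼ‖²)² ≤ D ∑_{j,k} |⟪vⱼ, vₖ⟫|². For the
tensor powers this reads n² ≤ D (n + n(n-1) max_{j≠k} |⟪τⱼ, τₖ⟫|^{2m}).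
-/

open Finset Matrix

section SymTensorPower

variable {𝕜 ι : Type*} [RCLike 𝕜] [Fintype ι] [DecidableEq ι]

/-- Coordinates of `x^{⊗m}` in an orthonormal basis of symmetric tensors indexed by multisets; the
weights `√(multinomial coefficient)` are what the multinomial theorem needs in
`inner_symTensorPower`. -/
noncomputable def symTensorPower (m : ℕ) (x : EuclideanSpace 𝕜 ι) :
    EuclideanSpace 𝕜 (Sym ι m) :=
  WithLp.toLp 2 fun k => (√(k.val.countPerms : ℝ) : 𝕜) * (k.val.map x).prod

theorem inner_symTensorPower (m : ℕ) (x y : EuclideanSpace 𝕜 ι) :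
    inner 𝕜 (symTensorPower m x) (symTensorPower m y) = inner 𝕜 x y ^ m := by
  simp only [PiLp.inner_apply, RCLike.inner_apply, symTensorPower]
  rw [Finset.sum_pow, sym_univ]
  refine sum_congr rfl fun k _ => ?_
  have hc : (√(k.val.countPerms : ℝ) : 𝕜) * (√(k.val.countPerms : ℝ) : 𝕜) =
      k.val.countPerms := by
    rw [← RCLike.ofReal_mul, Real.mul_self_sqrt (Nat.cast_nonneg _), RCLike.ofReal_natCast]
  rw [Multiset.prod_map_mul, map_mul, RCLike.conj_ofReal, ← hc, map_multiset_prod,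
    Multiset.map_map]
  simp only [Function.comp_def]
  ring

theorem norm_symTensorPower (m : ℕ) (x : EuclideanSpace 𝕜 ι) :
    ‖symTensorPower m x‖ = ‖x‖ ^ m := by
  have h : ((‖symTensorPower m x‖ : ℝ) : 𝕜) ^ 2 = ((‖x‖ ^ m : ℝ) : 𝕜) ^ 2 := by
    rw [← inner_self_eq_norm_sq_to_K, inner_symTensorPower, inner_self_eq_norm_sq_to_K]
    push_cast
    ring
  exact (pow_left_inj₀ (norm_nonneg _) (by positivity) two_ne_zero).1 (by exact_mod_cast h)

end SymTensorPower

section FramePotential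

variable {𝕜 ι κ : Type*} [RCLike 𝕜] [Fintype ι] [Fintype κ]

theorem Matrix.trace_mul_conjTranspose_self (A : Matrix κ ι 𝕜) :
    (A * Aᴴ).trace = ∑ i, ∑ j, ((‖A i j‖ ^ 2 : ℝ) : 𝕜) := by
  refine sum_congr rfl fun i _ => sum_congr rfl fun j _ => ?_
  simp only [conjTranspose_apply, RCLike.star_def, RCLike.mul_conj, RCLike.ofReal_pow]

theorem Matrix.sum_norm_sq_mul_conjTranspose_self (W : Matrix κ ι 𝕜) :
    ∑ i, ∑ j, ‖(W * Wᴴ) i j‖ ^ 2 = ∑ i, ∑ j, ‖(Wᴴ * W) i j‖ ^ 2 := by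
  apply RCLike.ofReal_injective (K := 𝕜)
  simp only [RCLike.ofReal_sum]
  rw [← trace_mul_conjTranspose_self, ← trace_mul_conjTranspose_self, conjTranspose_mul,
    conjTranspose_mul, conjTranspose_conjTranspose, Matrix.mul_assoc,
    ← Matrix.mul_assoc Wᴴ W Wᴴ, trace_mul_comm, Matrix.mul_assoc]

theorem Matrix.sq_sum_norm_sq_le_card_mul_sum_norm_sq_conjTranspose_mul_self
    (W : Matrix κ ι 𝕜) :
    (∑ i, ∑ j, ‖W i j‖ ^ 2) ^ 2 ≤ Fintype.card κ * ∑ j, ∑ j', ‖(Wᴴ * W) j j'‖ ^ 2 := by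
  have hdiag : ∀ i, ‖(W * Wᴴ) i i‖ = ∑ j, ‖W i j‖ ^ 2 := fun i => by
    rw [mul_apply]
    simp only [conjTranspose_apply, RCLike.star_def, RCLike.mul_conj, ← RCLike.ofReal_pow,
      ← RCLike.ofReal_sum, RCLike.norm_ofReal]
    exact abs_of_nonneg (by positivity)
  calc (∑ i, ∑ j, ‖W i j‖ ^ 2) ^ 2
      ≤ Fintype.card κ * ∑ i, (∑ j, ‖W i j‖ ^ 2) ^ 2 := sq_sum_le_card_mul_sum_sq
    _ ≤ Fintype.card κ * ∑ i, ∑ t, ‖(W * Wᴴ) i t‖ ^ 2 := by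
      gcongr with i
      rw [← hdiag]
      exact single_le_sum (f := fun t => ‖(W * Wᴴ) i t‖ ^ 2) (fun _ _ => by positivity)
        (mem_univ i)
    _ = Fintype.card κ * ∑ j, ∑ j', ‖(Wᴴ * W) j j'‖ ^ 2 := by
      rw [sum_norm_sq_mul_conjTranspose_self]

theorem sq_sum_norm_sq_le_finrank_mul_sum_norm_inner_sq {E : Type*} [NormedAddCommGroup E]
    [InnerProductSpace 𝕜 E] [FiniteDimensional 𝕜 E] (v : ι → E) :
    (∑ j, ‖v j‖ ^ 2) ^ 2 ≤ Module.finrank 𝕜 E * ∑ j, ∑ k, ‖inner 𝕜 (v j) (v k)‖ ^ 2 := by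
  let b := stdOrthonormalBasis 𝕜 E
  have hgram := gram_eq_conjTranspose_mul b v
  have hnorm : ∀ j, ‖v j‖ ^ 2 = ∑ i, ‖b.repr (v j) i‖ ^ 2 := fun j => by
    rw [← EuclideanSpace.norm_sq_eq, LinearIsometryEquiv.norm_map]
  have := sq_sum_norm_sq_le_card_mul_sum_norm_sq_conjTranspose_mul_self
    (of fun i j => b.repr (v j) i)
  rw [← hgram, Fintype.card_fin, sum_comm] at this
  simpa only [hnorm, gram_apply, of_apply] using this

end FramePotential

theorem sum_sum_le_of_offDiag_le {ι : Type*} [Fintype ι] [DecidableEq ι] (f : ι → ι → ℝ)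
    (B : ℝ) (hdiag : ∀ j, f j j ≤ 1) (hoff : ∀ j k, j ≠ k → f j k ≤ B) :
    ∑ j, ∑ k, f j k ≤ Fintype.card ι + Fintype.card ι * (Fintype.card ι - 1) * B := by
  have hrow : ∀ j, ∑ k, f j k ≤ 1 + (Fintype.card ι - 1) * B := fun j => by
    have hcard : ((univ.erase j).card : ℝ) = Fintype.card ι - 1 := by
      rw [card_erase_of_mem (mem_univ j), card_univ,
        Nat.cast_sub (Fintype.card_pos_iff.2 ⟨j⟩), Nat.cast_one]
    have hrest := sum_le_card_nsmul (univ.erase j) (f j) B fun k hk =>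
      hoff j k (ne_of_mem_erase hk).symm
    rw [nsmul_eq_mul, hcard] at hrest
    rw [← add_sum_erase _ _ (mem_univ j)]
    linarith [hdiag j]
  calc ∑ j, ∑ k, f j k ≤ ∑ _j : ι, (1 + (Fintype.card ι - 1) * B) :=
        sum_le_sum fun j _ => hrow j
    _ = _ := by rw [sum_const, card_univ, nsmul_eq_mul]; ring

theorem le_of_sq_le_mul_add_mul {n D B : ℝ} (hn : 1 < n) (hD : 0 ≤ D)
    (h : n ^ 2 ≤ D * (n + n * (n - 1) * B)) : 1 / (n - 1) * (n / D - 1) ≤ B := by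
  have hDpos : 0 < D := hD.lt_of_ne fun hD0 => by subst hD0; nlinarith
  rw [one_div, inv_mul_le_iff₀ (by linarith), sub_le_iff_le_add, div_le_iff₀ hDpos]
  nlinarith

theorem sq_card_le_choose_mul_sum_norm_inner_pow {𝕜 ι κ : Type*} [RCLike 𝕜] [Fintype ι]
    [DecidableEq ι] [Fintype κ] (τ : κ → EuclideanSpace 𝕜 ι) (hτ : ∀ j, ‖τ j‖ = 1) (m : ℕ) :
    (Fintype.card κ : ℝ) ^ 2 ≤
      (Fintype.card ι + m - 1).choose m * ∑ j, ∑ k, ‖inner 𝕜 (τ j) (τ k)‖ ^ (2 * m) := by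
  have := sq_sum_norm_sq_le_finrank_mul_sum_norm_inner_sq (𝕜 := 𝕜) (symTensorPower m ∘ τ)
  simpa [norm_symTensorPower, inner_symTensorPower, hτ, finrank_euclideanSpace,
    Sym.card_sym_eq_choose, norm_pow, pow_mul'] using this

/-- **Higher order Welch bound.** For `n ≥ d ≥ 1`, `n > 1`, unit vectors `τ₁,…,τₙ` in `ℂ^d`
and `m ≥ 1`, `max_{j≠k} |⟨τⱼ,τₖ⟩|^(2m) ≥ (1/(n-1)) (n / C(d+m-1,m) − 1)`. -/
theorem higher_order_welch_bound (d n : ℕ) (hn : 1 < n)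
    (τ : Fin n → EuclideanSpace ℂ (Fin d)) (hτ : ∀ j, ‖τ j‖ = 1)
    (m : ℕ) :
    (1 / ((n : ℝ) - 1)) * ((n : ℝ) / ((d + m - 1).choose m : ℝ) - 1) ≤
      (Finset.univ.offDiag.sup'
        ⟨(⟨0, by omega⟩, ⟨1, by omega⟩), by
          simp [Finset.mem_offDiag, Fin.ext_iff]⟩
        fun p => ‖(inner ℂ (τ p.1) (τ p.2) : ℂ)‖ ^ (2 * m)) := by
  suffices key : ∀ B : ℝ, (∀ j k, j ≠ k → ‖inner ℂ (τ j) (τ k)‖ ^ (2 * m) ≤ B) →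
      1 / ((n : ℝ) - 1) * ((n : ℝ) / ((d + m - 1).choose m : ℝ) - 1) ≤ B from
    key _ fun j k hjk => le_sup' (fun p : Fin n × Fin n => ‖inner ℂ (τ p.1) (τ p.2)‖ ^ (2 * m))
      (b := (j, k)) (by simpa using hjk)
  intro B hoff
  have hpotential := sq_card_le_choose_mul_sum_norm_inner_pow τ hτ m
  have hsum := sum_sum_le_of_offDiag_le _ B
    (fun j => by simp [inner_self_eq_norm_sq_to_K, hτ]) hoff
  simp only [Fintype.card_fin] at hpotential hsum
  exact le_of_sq_le_mul_add_mul (by exact_mod_cast hn) (Nat.cast_nonneg _)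
    (hpotential.trans (mul_le_mul_of_nonneg_left hsum (Nat.cast_nonneg _)))
end

section
/- Let A be a commutative unital C*-algebra and let τ₁, …, τₙ be elements of the standard Hilbert C*-module A^d (with A-valued inner product ⟨x,y⟩ = Σᵣ xᵣ yᵣ*) such that ⟨τⱼ, τⱼ⟩ = 1 for all j, where n ≥ d. Then for every natural number m ≥ 1, the element Σⱼ Σₖ ⟨τⱼ, τₖ⟩^m ⟨τₖ, τⱼ⟩^m − (n²/C(d+m-1,m))·1 is a positive element of A. -/
/-- The standard `A`-valued inner product on the standard Hilbert C*-module `A^d`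
over a commutative C*-algebra `A`: `⟨x,y⟩ = ∑ r, x r * (y r)*`. -/
def stdInner {A : Type*} [NormedCommRing A] [StarRing A] {d : ℕ}
    (x y : Fin d → A) : A :=
  ∑ r, x r * star (y r)

/-!
By Gelfand duality an element of a commutative C*-algebra has the form `b⋆ * b` as soon as every
character maps it to a nonnegative real, and a character `φ` carries the `τⱼ` to unit vectors
`vⱼ = φ ∘ τⱼ` of `ℂ^d`. So it suffices to prove the scalar Welch bound
`∑ⱼₖ |⟨vⱼ, vₖ⟩|^(2m) ≥ n² / C(d+m-1, m)`. Passing to symmetric tensor powers, which are unit vectors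
in a space of dimension `D = C(d+m-1, m)` with inner products `⟨vⱼ, vₖ⟩^m`, reduces this to `m = 1`.
There, for the matrix `W` with rows `wⱼ`, `∑ⱼₖ |⟨wⱼ, wₖ⟩|² = ‖W W⋆‖_F² = ‖W⋆ W‖_F²`, and
Cauchy–Schwarz on the diagonal of `W⋆ W` bounds this below by `|tr (W⋆ W)|² / D = n² / D`.
-/

open Finset Matrix WeakDual

section StdInner

variable {A : Type*} [NormedCommRing A] [StarRing A] {d : ℕ}

lemma stdInner_eq_dotProduct (x y : Fin d → A) : stdInner x y = x ⬝ᵥ star y := rfl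

lemma star_stdInner (x y : Fin d → A) : star (stdInner x y) = stdInner y x := by
  simp only [stdInner, star_sum, star_mul', star_star, mul_comm]

lemma map_stdInner {B F : Type*} [NormedCommRing B] [StarRing B] [FunLike F A B]
    [RingHomClass F A B] [StarHomClass F A B] (φ : F) (x y : Fin d → A) :
    φ (stdInner x y) = stdInner (φ ∘ x) (φ ∘ y) := by
  simp only [stdInner, map_sum, map_mul, map_star, Function.comp_apply]

end StdInner

section RCLike

variable {𝕜 : Type*} [RCLike 𝕜] {ι κ : Type*} [Fintype ι] [Fintype κ]

lemma dotProduct_star_self_eq_sum_norm_sq (x : κ → 𝕜) :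
    x ⬝ᵥ star x = ((∑ r, ‖x r‖ ^ 2 : ℝ) : 𝕜) := by
  simp only [dotProduct, Pi.star_apply, RCLike.star_def, RCLike.mul_conj]
  push_cast; rfl

lemma stdInner_pow_mul_stdInner_pow {d : ℕ} (x y : Fin d → 𝕜) (m : ℕ) :
    stdInner x y ^ m * stdInner y x ^ m = ((‖stdInner x y‖ ^ (2 * m) : ℝ) : 𝕜) := by
  rw [← star_stdInner x y, ← mul_pow, RCLike.star_def, RCLike.mul_conj]
  push_cast; ring

namespace Matrix

lemma trace_mul_conjTranspose_self_eq_sum_norm_sq (M : Matrix ι κ 𝕜) :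
    (M * Mᴴ).trace = ((∑ i, ∑ j, ‖M i j‖ ^ 2 : ℝ) : 𝕜) := by
  simp only [trace, diag_apply, mul_apply', conjTranspose_apply]
  rw [RCLike.ofReal_sum]
  exact sum_congr rfl fun i _ => dotProduct_star_self_eq_sum_norm_sq (M i)

lemma sum_norm_sq_mul_conjTranspose_eq_sum_norm_sq_conjTranspose_mul (W : Matrix ι κ 𝕜) :
    ∑ j, ∑ k, ‖(W * Wᴴ) j k‖ ^ 2 = ∑ σ, ∑ τ, ‖(Wᴴ * W) σ τ‖ ^ 2 := by
  have key : (W * Wᴴ * (W * Wᴴ)ᴴ).trace = (Wᴴ * W * (Wᴴ * W)ᴴ).trace := by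
    simp only [conjTranspose_mul, conjTranspose_conjTranspose, Matrix.mul_assoc]
    rw [trace_mul_comm, Matrix.mul_assoc, Matrix.mul_assoc]
  rwa [trace_mul_conjTranspose_self_eq_sum_norm_sq, trace_mul_conjTranspose_self_eq_sum_norm_sq,
    RCLike.ofReal_inj] at key

lemma norm_trace_sq_le_card_mul_sum_norm_sq {R : Type*} [SeminormedAddCommGroup R]
    (F : Matrix κ κ R) : ‖F.trace‖ ^ 2 ≤ Fintype.card κ * ∑ σ, ∑ τ, ‖F σ τ‖ ^ 2 :=
  calc ‖F.trace‖ ^ 2 ≤ (∑ σ, ‖F σ σ‖) ^ 2 := by gcongr; exact norm_sum_le _ _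
    _ ≤ Fintype.card κ * ∑ σ, ‖F σ σ‖ ^ 2 := sq_sum_le_card_mul_sum_sq
    _ ≤ Fintype.card κ * ∑ σ, ∑ τ, ‖F σ τ‖ ^ 2 := by
      gcongr with σ
      exact single_le_sum (f := fun τ => ‖F σ τ‖ ^ 2) (fun _ _ => by positivity) (mem_univ σ)

lemma sq_sum_norm_sq_le_card_mul_sum_norm_sq_mul_conjTranspose_self (W : Matrix ι κ 𝕜) :
    (∑ j, ∑ σ, ‖W j σ‖ ^ 2) ^ 2 ≤ Fintype.card κ * ∑ j, ∑ k, ‖(W * Wᴴ) j k‖ ^ 2 := by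
  have htrace : (Wᴴ * W).trace = ((∑ j, ∑ σ, ‖W j σ‖ ^ 2 : ℝ) : 𝕜) := by
    simpa [sum_comm (γ := ι)] using trace_mul_conjTranspose_self_eq_sum_norm_sq Wᴴ
  have hnorm : ‖(Wᴴ * W).trace‖ = ∑ j, ∑ σ, ‖W j σ‖ ^ 2 := by
    rw [htrace, RCLike.norm_ofReal, abs_of_nonneg (by positivity)]
  rw [sum_norm_sq_mul_conjTranspose_eq_sum_norm_sq_conjTranspose_mul, ← hnorm]
  exact norm_trace_sq_le_card_mul_sum_norm_sq _

end Matrix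

/-- Coordinates of `x ^ ⊗m` in the orthonormal basis of the symmetric tensor power indexed by
multisets; the weights are square roots of multinomial coefficients. -/
noncomputable def symPow [DecidableEq κ] (m : ℕ) (x : κ → 𝕜) (σ : Sym κ m) : 𝕜 :=
  (√(σ.1.countPerms : ℝ) : 𝕜) * (σ.1.map x).prod

lemma symPow_dotProduct_star_symPow [DecidableEq κ] (m : ℕ) (x y : κ → 𝕜) :
    symPow m x ⬝ᵥ star (symPow m y) = (x ⬝ᵥ star y) ^ m := by
  rw [dotProduct, dotProduct, sum_pow, sym_univ]
  refine sum_congr rfl fun σ _ => ?_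
  have hsqrt : (√(σ.1.countPerms : ℝ) : 𝕜) * √(σ.1.countPerms : ℝ) = σ.1.countPerms := by
    rw [← RCLike.ofReal_mul, Real.mul_self_sqrt (Nat.cast_nonneg _), RCLike.ofReal_natCast]
  simp only [symPow, Pi.star_apply, star_mul', RCLike.star_def, RCLike.conj_ofReal,
    map_multiset_prod, Multiset.map_map, Function.comp_def, Multiset.prod_map_mul, ← hsqrt]
  ring

theorem welch_bound_s3 [DecidableEq κ] (v : ι → κ → 𝕜) (hv : ∀ j, v j ⬝ᵥ star (v j) = 1) (m : ℕ) :
    (Fintype.card ι : ℝ) ^ 2 / (Fintype.card κ + m - 1).choose m ≤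
      ∑ j, ∑ k, ‖v j ⬝ᵥ star (v k)‖ ^ (2 * m) := by
  let W : Matrix ι (Sym κ m) 𝕜 := of fun j => symPow m (v j)
  have hW (j : ι) : W j = symPow m (v j) := rfl
  have hrow (j : ι) : ∑ σ, ‖W j σ‖ ^ 2 = 1 := by
    have h := dotProduct_star_self_eq_sum_norm_sq (W j)
    rw [hW, symPow_dotProduct_star_symPow, hv, one_pow] at h
    exact_mod_cast h.symm
  have hgram (j k : ι) : ‖(W * Wᴴ) j k‖ ^ 2 = ‖v j ⬝ᵥ star (v k)‖ ^ (2 * m) := by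
    have h : (W * Wᴴ) j k = W j ⬝ᵥ star (W k) := rfl
    rw [h, hW, hW, symPow_dotProduct_star_symPow, norm_pow, ← pow_mul, mul_comm]
  have key := sq_sum_norm_sq_le_card_mul_sum_norm_sq_mul_conjTranspose_self W
  simp only [hrow, hgram, sum_const, card_univ, nsmul_eq_mul, mul_one,
    Sym.card_sym_eq_choose] at key
  exact div_le_of_le_mul₀ (by positivity) (by positivity) (by linarith)

end RCLike

open scoped ComplexOrder in
theorem CommCStarAlgebra.exists_eq_star_mul_self_of_forall_character_nonneg
    {A : Type*} [CommCStarAlgebra A] {a : A} (ha : ∀ φ : characterSpace ℂ A, 0 ≤ φ a) :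
    ∃ b, a = star b * b := by
  let := CStarAlgebra.spectralOrder A
  let := CStarAlgebra.spectralOrderedRing A
  have : IsStarNormal a := ⟨Commute.all _ _⟩
  refine CStarAlgebra.nonneg_iff_eq_star_mul_self.mp ?_
  rw [StarOrderedRing.nonneg_iff_spectrum_nonneg (R := ℂ) a]
  intro z hz
  obtain ⟨φ, rfl⟩ := CharacterSpace.mem_spectrum_iff_exists.mp hz
  exact ha φ

theorem modular_welch_bound_positive_general {A : Type*} [NormedCommRing A] [StarRing A]
    [CStarRing A] [NormedAlgebra ℂ A] [StarModule ℂ A] [CompleteSpace A]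
    {d n : ℕ} (τ : Fin n → Fin d → A)
    (hτ : ∀ j, stdInner (τ j) (τ j) = 1) (m : ℕ) :
    ∃ b : A,
      (∑ j, ∑ k, (stdInner (τ j) (τ k)) ^ m * (stdInner (τ k) (τ j)) ^ m) -
        (((n : ℂ) ^ 2 / ((d + m - 1).choose m : ℂ)) • (1 : A)) = star b * b := by
  let : CommCStarAlgebra A := { }
  refine CommCStarAlgebra.exists_eq_star_mul_self_of_forall_character_nonneg fun φ => ?_
  have hv (j : Fin n) : (φ ∘ τ j) ⬝ᵥ star (φ ∘ τ j) = 1 := by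
    rw [← stdInner_eq_dotProduct, ← map_stdInner, hτ, map_one]
  have hwelch := welch_bound_s3 (fun j => φ ∘ τ j) hv m
  simp only [Fintype.card_fin, ← stdInner_eq_dotProduct] at hwelch
  simp only [map_sub, map_sum, map_mul, map_pow, map_stdInner, stdInner_pow_mul_stdInner_pow,
    map_smul, map_one, smul_eq_mul, mul_one, Complex.coe_algebraMap]
  have hφ := Complex.zero_le_real.mpr (sub_nonneg.mpr hwelch)
  push_cast at hφ ⊢
  exact hφ

/-- **Modular Welch bound (positivity form).** In the standard Hilbert C*-module `A^d` over a
commutative unital C*-algebra `A`, for unit inner product vectors `τ₁,…,τₙ` (`n ≥ d`) and `m ≥ 1`,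
`∑ⱼ∑ₖ ⟨τⱼ,τₖ⟩^m ⟨τₖ,τⱼ⟩^m − (n²/C(d+m-1,m))·1` is a positive element of `A`. -/
theorem modular_welch_bound_positive {A : Type*} [NormedCommRing A] [StarRing A]
    [CStarRing A] [NormedAlgebra ℂ A] [StarModule ℂ A] [CompleteSpace A]
    {d n : ℕ} (hdn : d ≤ n) (τ : Fin n → Fin d → A)
    (hτ : ∀ j, stdInner (τ j) (τ j) = 1) (m : ℕ) (hm : 1 ≤ m) :
    ∃ b : A,
      (∑ j, ∑ k, (stdInner (τ j) (τ k)) ^ m * (stdInner (τ k) (τ j)) ^ m) -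
        (((n : ℂ) ^ 2 / ((d + m - 1).choose m : ℂ)) • (1 : A)) = star b * b :=
  modular_welch_bound_positive_general τ hτ m
end

section
/- Let A be a commutative unital C*-algebra, n ≥ d ≥ 1, and τ₁, …, τₙ ∈ A^d with ⟨τⱼ,τⱼ⟩ = 1 for all j. Then for every m ≥ 1, Σⱼ Σₖ ⟨τⱼ,τₖ⟩^m⟨τₖ,τⱼ⟩^m ≥ (1/C(d+m−1,m)) · (Σⱼ ⟨τⱼ,τⱼ⟩^m)², and since ⟨τⱼ,τⱼ⟩ = 1 the right side equals n²/C(d+m−1,m). -/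
open Finset Complex

private lemma sum4_comm {ι κ : Type*} [Fintype ι] [Fintype κ] (g : ι → ι → κ → κ → ℂ) :
    ∑ j, ∑ k, ∑ p, ∑ q, g j k p q = ∑ p, ∑ q, ∑ j, ∑ k, g j k p q := by
  calc ∑ j, ∑ k, ∑ p, ∑ q, g j k p q
      = ∑ j, ∑ p, ∑ k, ∑ q, g j k p q :=
        Finset.sum_congr rfl fun j _ => Finset.sum_comm
    _ = ∑ p, ∑ j, ∑ k, ∑ q, g j k p q := Finset.sum_comm
    _ = ∑ p, ∑ j, ∑ q, ∑ k, g j k p q :=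
        Finset.sum_congr rfl fun p _ => Finset.sum_congr rfl fun j _ => Finset.sum_comm
    _ = ∑ p, ∑ q, ∑ j, ∑ k, g j k p q :=
        Finset.sum_congr rfl fun p _ => Finset.sum_comm

private lemma scalar_welch {d n : ℕ} (m : ℕ) (v : Fin n → Fin d → ℂ)
    (hv : ∀ j, ∑ r, v j r * (starRingEnd ℂ) (v j r) = 1) :
    (n : ℝ) ^ 2 ≤ ((d + m - 1).choose m : ℝ) *
      ∑ j, ∑ k, Complex.normSq ((∑ r, v j r * (starRingEnd ℂ) (v k r)) ^ m) := by
  classical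
  set u : Fin n → (Fin m → Fin d) → ℂ := fun j p => ∏ i, v j (p i) with hu
  set G : Fin n → Fin n → ℂ := fun j k => ∑ p, u j p * (starRingEnd ℂ) (u k p) with hGdef
  have hG : ∀ j k, (∑ r, v j r * (starRingEnd ℂ) (v k r)) ^ m = G j k := by
    intro j k
    rw [Finset.sum_pow', Fintype.piFinset_univ]
    refine Finset.sum_congr rfl fun p _ => ?_
    rw [Finset.prod_mul_distrib, ← map_prod]
  set M : (Fin m → Fin d) → (Fin m → Fin d) → ℂ :=
    fun p q => ∑ j, u j p * (starRingEnd ℂ) (u j q) with hMdef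
  set π : (Fin m → Fin d) → Sym (Fin d) m :=
    fun p => ⟨Multiset.map p Finset.univ.val, by simp⟩ with hπ
  have uconst : ∀ j p q, π p = π q → u j p = u j q := by
    intro j p q h
    have hpq : Multiset.map p Finset.univ.val = Multiset.map q Finset.univ.val :=
      congrArg Subtype.val h
    calc u j p = (Multiset.map (v j) (Multiset.map p Finset.univ.val)).prod := by
          rw [Multiset.map_map, hu]
          exact Finset.prod_eq_multiset_prod _ _
      _ = (Multiset.map (v j) (Multiset.map q Finset.univ.val)).prod := by rw [hpq]
      _ = u j q := by
          rw [Multiset.map_map, hu]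
          exact (Finset.prod_eq_multiset_prod _ _).symm
  have Mconst : ∀ p q p' q', π p = π p' → π q = π q' → M p q = M p' q' := by
    intro p q p' q' h1 h2
    exact Finset.sum_congr rfl fun j _ => by rw [uconst j p p' h1, uconst j q q' h2]
  -- main complex identity
  have e1 : ∀ j k, G j k * (starRingEnd ℂ) (G j k) =
      ∑ p, ∑ q, (u j p * (starRingEnd ℂ) (u k p)) *
        (starRingEnd ℂ) (u j q * (starRingEnd ℂ) (u k q)) := by
    intro j k
    simp only [hGdef]
    rw [map_sum, Finset.sum_mul_sum]
  have e2 : ∀ p q, M p q * (starRingEnd ℂ) (M p q) =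
      ∑ j, ∑ k, (u j p * (starRingEnd ℂ) (u j q)) *
        (starRingEnd ℂ) (u k p * (starRingEnd ℂ) (u k q)) := by
    intro p q
    simp only [hMdef]
    rw [map_sum, Finset.sum_mul_sum]
  have main : ∑ j, ∑ k, G j k * (starRingEnd ℂ) (G j k)
      = ∑ p, ∑ q, M p q * (starRingEnd ℂ) (M p q) := by
    simp only [e1, e2]
    rw [sum4_comm]
    refine Finset.sum_congr rfl fun p _ => Finset.sum_congr rfl fun q _ =>
      Finset.sum_congr rfl fun j _ => Finset.sum_congr rfl fun k _ => ?_
    simp only [map_mul, Complex.conj_conj]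
    ring
  have main' : ∑ j, ∑ k, Complex.normSq (G j k) = ∑ p, ∑ q, Complex.normSq (M p q) := by
    simp only [Complex.mul_conj] at main
    have h3 : ((∑ j, ∑ k, Complex.normSq (G j k) : ℝ) : ℂ)
        = ((∑ p, ∑ q, Complex.normSq (M p q) : ℝ) : ℂ) := by push_cast; exact main
    exact_mod_cast h3
  -- trace
  have hGdiag : ∀ j, G j j = 1 := by
    intro j
    rw [← hG j j, hv j, one_pow]
  have trace : ∑ p, M p p = (n : ℂ) := by
    have : ∑ p, M p p = ∑ j, G j j := by
      simp only [hMdef, hGdef]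
      exact Finset.sum_comm
    simp [this, hGdiag]
  have traceR : ∑ p, (M p p).re = (n : ℝ) := by
    have := congrArg Complex.re trace
    simpa [Complex.re_sum] using this
  -- fibers
  have hfib : ∑ c : Sym (Fin d) m, ∑ p ∈ univ.filter (fun p => π p = c), (M p p).re
      = ∑ p, (M p p).re :=
    Finset.sum_fiberwise_of_maps_to (fun p _ => Finset.mem_univ (π p)) _
  have hclass : ∀ c : Sym (Fin d) m,
      (∑ p ∈ univ.filter (fun p => π p = c), (M p p).re) ^ 2
        ≤ ∑ p ∈ univ.filter (fun p => π p = c),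
            ∑ q ∈ univ.filter (fun p => π p = c), Complex.normSq (M p q) := by
    intro c
    rcases Finset.eq_empty_or_nonempty (univ.filter (fun p => π p = c)) with he | ⟨p0, hp0⟩
    · simp [he]
    · have hmem : ∀ p ∈ univ.filter (fun p => π p = c), π p = π p0 := by
        intro p hp
        rw [(Finset.mem_filter.mp hp).2, (Finset.mem_filter.mp hp0).2]
      have hx : ∑ p ∈ univ.filter (fun p => π p = c), (M p p).re
          = ((univ.filter (fun p => π p = c)).card : ℝ) * (M p0 p0).re := by
        rw [Finset.sum_congr rfl fun p hp => by rw [Mconst p p p0 p0 (hmem p hp) (hmem p hp)]]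
        rw [Finset.sum_const, nsmul_eq_mul]
      have hrhs : ∑ p ∈ univ.filter (fun p => π p = c),
            ∑ q ∈ univ.filter (fun p => π p = c), Complex.normSq (M p q)
          = ((univ.filter (fun p => π p = c)).card : ℝ) ^ 2 * Complex.normSq (M p0 p0) := by
        rw [Finset.sum_congr rfl fun p hp => Finset.sum_congr rfl fun q hq => by
          rw [Mconst p q p0 p0 (hmem p hp) (hmem q hq)]]
        simp [Finset.sum_const, nsmul_eq_mul]
        ring
      rw [hx, hrhs, mul_pow]
      have hre : (M p0 p0).re ^ 2 ≤ Complex.normSq (M p0 p0) := by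
        rw [Complex.normSq_apply]
        nlinarith [mul_self_nonneg (M p0 p0).im]
      exact mul_le_mul_of_nonneg_left hre (sq_nonneg _)
  have hdrop : ∑ c : Sym (Fin d) m, ∑ p ∈ univ.filter (fun p => π p = c),
        ∑ q ∈ univ.filter (fun p => π p = c), Complex.normSq (M p q)
      ≤ ∑ p, ∑ q, Complex.normSq (M p q) := by
    calc ∑ c : Sym (Fin d) m, ∑ p ∈ univ.filter (fun p => π p = c),
          ∑ q ∈ univ.filter (fun p => π p = c), Complex.normSq (M p q)
        ≤ ∑ c : Sym (Fin d) m, ∑ p ∈ univ.filter (fun p => π p = c),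
            ∑ q, Complex.normSq (M p q) := by
          refine Finset.sum_le_sum fun c _ => Finset.sum_le_sum fun p _ => ?_
          exact Finset.sum_le_sum_of_subset_of_nonneg (Finset.filter_subset _ _)
            (fun q _ _ => Complex.normSq_nonneg _)
      _ = ∑ p, ∑ q, Complex.normSq (M p q) :=
          Finset.sum_fiberwise_of_maps_to (fun p _ => Finset.mem_univ (π p)) _
  have hcard : ((Fintype.card (Sym (Fin d) m)) : ℝ) = ((d + m - 1).choose m : ℝ) := by
    rw [Sym.card_sym_eq_choose, Fintype.card_fin]
  calc (n : ℝ) ^ 2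
      = (∑ c : Sym (Fin d) m, ∑ p ∈ univ.filter (fun p => π p = c), (M p p).re) ^ 2 := by
        rw [hfib, traceR]
    _ ≤ (univ : Finset (Sym (Fin d) m)).card *
          ∑ c : Sym (Fin d) m,
            (∑ p ∈ univ.filter (fun p => π p = c), (M p p).re) ^ 2 :=
        sq_sum_le_card_mul_sum_sq
    _ ≤ (univ : Finset (Sym (Fin d) m)).card *
          ∑ c : Sym (Fin d) m, ∑ p ∈ univ.filter (fun p => π p = c),
            ∑ q ∈ univ.filter (fun p => π p = c), Complex.normSq (M p q) := by
        refine mul_le_mul_of_nonneg_left (Finset.sum_le_sum fun c _ => hclass c) ?_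
        exact Nat.cast_nonneg _
    _ ≤ (univ : Finset (Sym (Fin d) m)).card * ∑ p, ∑ q, Complex.normSq (M p q) :=
        mul_le_mul_of_nonneg_left hdrop (by exact Nat.cast_nonneg _)
    _ = ((d + m - 1).choose m : ℝ) *
          ∑ j, ∑ k, Complex.normSq ((∑ r, v j r * (starRingEnd ℂ) (v k r)) ^ m) := by
        rw [Finset.card_univ, hcard, ← main']
        congr 1
        refine Finset.sum_congr rfl fun j _ => Finset.sum_congr rfl fun k _ => ?_
        rw [hG]


/-- **Dual-form modular Welch bound.** For a commutative unital C*-algebra `A`, `n ≥ d ≥ 1`,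
and `τ₁,…,τₙ ∈ A^d` with `⟨τⱼ,τⱼ⟩ = 1`, for every `m ≥ 1` one has, in the C*-order of `A`,
`∑ⱼ∑ₖ ⟨τⱼ,τₖ⟩^m⟨τₖ,τⱼ⟩^m ≥ (1/C(d+m−1,m))·(∑ⱼ ⟨τⱼ,τⱼ⟩^m)²`, and since `⟨τⱼ,τⱼ⟩ = 1` the
right-hand side equals `(n²/C(d+m−1,m))·1`. -/
theorem dual_modular_welch_bound {A : Type*} [NormedCommRing A] [StarRing A]
    [CStarRing A] [NormedAlgebra ℂ A] [StarModule ℂ A] [CompleteSpace A]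
    [PartialOrder A] [StarOrderedRing A]
    {d n : ℕ} (hd : 1 ≤ d) (hdn : d ≤ n) (τ : Fin n → Fin d → A)
    (hτ : ∀ j, stdInner (τ j) (τ j) = 1) (m : ℕ) (hm : 1 ≤ m) :
    ((1 : ℂ) / ((d + m - 1).choose m : ℂ)) • (∑ j, (stdInner (τ j) (τ j)) ^ m) ^ 2 ≤
        ∑ j, ∑ k, (stdInner (τ j) (τ k)) ^ m * (stdInner (τ k) (τ j)) ^ m ∧
      ((1 : ℂ) / ((d + m - 1).choose m : ℂ)) • (∑ j, (stdInner (τ j) (τ j)) ^ m) ^ 2 =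
        ((n : ℂ) ^ 2 / ((d + m - 1).choose m : ℂ)) • (1 : A) := by
  letI : CStarAlgebra A :=
    { ‹NormedCommRing A›.toNormedRing, ‹StarRing A›, ‹CStarRing A›, ‹CompleteSpace A›,
      ‹NormedAlgebra ℂ A›, ‹StarModule ℂ A› with }
  have hNpos : 0 < (d + m - 1).choose m := Nat.choose_pos (by omega)
  have hNR : (0 : ℝ) < ((d + m - 1).choose m : ℝ) := by exact_mod_cast hNpos
  have heq : ((1 : ℂ) / ((d + m - 1).choose m : ℂ)) • (∑ j, (stdInner (τ j) (τ j)) ^ m) ^ 2 =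
      ((n : ℂ) ^ 2 / ((d + m - 1).choose m : ℂ)) • (1 : A) := by
    have h1 : (∑ j, (stdInner (τ j) (τ j)) ^ m) = (n : ℂ) • (1 : A) := by
      simp only [hτ, one_pow, Finset.sum_const, Finset.card_univ, Fintype.card_fin, smul_eq_mul,
        mul_one]
      rw [Nat.cast_smul_eq_nsmul, nsmul_eq_mul, mul_one]
    rw [h1, smul_pow, one_pow, smul_smul]
    congr 1
    ring
  refine ⟨?_, heq⟩
  rw [heq, ← sub_nonneg]
  set N : ℂ := ((d + m - 1).choose m : ℂ) with hN
  set b : A := ∑ j, ∑ k, (stdInner (τ j) (τ k)) ^ m * (stdInner (τ k) (τ j)) ^ m with hb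
  have hstar : ∀ x y : Fin d → A, star (stdInner x y) = stdInner y x := by
    intro x y
    simp [stdInner, star_sum, star_mul, mul_comm]
  have hbsa : IsSelfAdjoint b := by
    rw [IsSelfAdjoint, hb, star_sum]
    refine Finset.sum_congr rfl fun j _ => ?_
    rw [star_sum]
    refine Finset.sum_congr rfl fun k _ => ?_
    rw [star_mul, star_pow, star_pow, hstar, hstar, mul_comm]
  have hasa : IsSelfAdjoint (b - ((n : ℂ) ^ 2 / N) • (1 : A)) := by
    refine hbsa.sub ?_
    rw [IsSelfAdjoint, star_smul, star_one]
    congr 1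
    simp [hN, ← Complex.ofReal_natCast]
  rw [StarOrderedRing.nonneg_iff_spectrum_nonneg (R := ℝ) _ hasa]
  intro x hx
  have hx' : (x : ℂ) ∈ spectrum ℂ (b - ((n : ℂ) ^ 2 / N) • (1 : A)) := by
    have := spectrum.algebraMap_mem ℂ hx
    simpa using this
  obtain ⟨φ, hφ⟩ := WeakDual.CharacterSpace.mem_spectrum_iff_exists.mp hx'
  -- compute φ of the element
  set v : Fin n → Fin d → ℂ := fun j r => φ (τ j r) with hv
  have hinner : ∀ j k, φ (stdInner (τ j) (τ k)) = ∑ r, v j r * (starRingEnd ℂ) (v k r) := by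
    intro j k
    rw [stdInner, map_sum]
    refine Finset.sum_congr rfl fun r _ => ?_
    rw [map_mul, map_star]
    rfl
  have hvunit : ∀ j, ∑ r, v j r * (starRingEnd ℂ) (v j r) = 1 := by
    intro j
    rw [← hinner j j, hτ j, map_one]
  have hφb : φ b = ((∑ j, ∑ k,
      Complex.normSq ((∑ r, v j r * (starRingEnd ℂ) (v k r)) ^ m) : ℝ) : ℂ) := by
    rw [hb, map_sum]
    push_cast
    refine Finset.sum_congr rfl fun j _ => ?_
    rw [map_sum]
    refine Finset.sum_congr rfl fun k _ => ?_
    rw [map_mul, map_pow, map_pow, ← hstar (τ j) (τ k), map_star, hinner j k]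
    rw [← star_pow, Complex.star_def, Complex.mul_conj]
  have hφa : φ (b - ((n : ℂ) ^ 2 / N) • (1 : A)) = φ b - (n : ℂ) ^ 2 / N := by
    rw [map_sub, map_smul, map_one, smul_eq_mul, mul_one]
  have hkey := scalar_welch m v hvunit
  set S : ℝ := ∑ j, ∑ k, Complex.normSq ((∑ r, v j r * (starRingEnd ℂ) (v k r)) ^ m) with hS
  have hxval : (x : ℂ) = (S : ℂ) - (n : ℂ) ^ 2 / N := by
    rw [← hφ, hφa, hφb]
  have hNc : N = ((((d + m - 1).choose m : ℝ)) : ℂ) := by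
    rw [hN]; push_cast; ring
  have hx2 : (x : ℂ) = ((S - (n : ℝ) ^ 2 / ((d + m - 1).choose m : ℝ) : ℝ) : ℂ) := by
    rw [hxval, hNc]; push_cast; ring
  have hxr : x = S - (n : ℝ) ^ 2 / ((d + m - 1).choose m : ℝ) := by
    exact_mod_cast hx2
  rw [hxr, sub_nonneg, div_le_iff₀ hNR, mul_comm]
  exact hkey
end
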